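/- Let (X,d) be a metric space whose underlying set X is finite and nonempty, and suppose (X,d) satisfies the tie-breaking rule. Then the basic geodesic graph of (X,d) is a tree (connected and acyclic) if and only if (X,d) satisfies the fourth-point condition. -/

import Mathlib

/-!
A pair `{x, y}` is non-basic exactly when some third point `p` satisfies
`d(x, p) + d(p, y) = d(x, y)`; both halves are then shorter, so by induction on the distance every
pair is joined by a walk of basic edges whose length is the distance. Hence the basic geodesic
graph is connected, and when it is a tree its unique paths are geodesics. The point `q` of the
`y`–`z` path closest to `x` then meets the `x`–`q` path only at `q`, so `q` is a median of
`x, y, z`: this is the fourth-point condition.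

Conversely, the fourth-point condition provides medians. For a basic edge `v₀v₁` the median of
`v₀, v₁, z` is `v₀` or `v₁`, which puts each `z` on the side of `v₀` or of `v₁`. A basic edge `ab`
from the side of `v₁` to that of `v₀` has `d(a, b) = d(v₀, v₁)` (compare medians again), so by the
tie-breaking rule it is `v₀v₁`. Every edge is therefore a bridge, and the graph is acyclic.
-/

/-- A chain of intermediate points witnessing that the pair `{x, x'}` is non-basic:
`k ≥ 1` pairwise distinct intermediate points, each different from `x` and `x'`,
along which the distances sum to `dist x x'`. -/
def IsNonBasicChain {X : Type*} [MetricSpace X] (x x' : X) : Prop :=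
  ∃ (k : ℕ) (p : Fin (k + 2) → X), 1 ≤ k ∧ Function.Injective p ∧
    p 0 = x ∧ p (Fin.last (k + 1)) = x' ∧
    dist x x' = ∑ i : Fin (k + 1), dist (p i.castSucc) (p i.succ)

/-- The unordered pair `{x, x'}` is a non-basic edge. -/
def IsNonBasicEdge {X : Type*} [MetricSpace X] (x x' : X) : Prop :=
  IsNonBasicChain x x' ∨ IsNonBasicChain x' x

/-- The unordered pair `{x, x'}` is a basic edge. -/
def IsBasicEdge {X : Type*} [MetricSpace X] (x x' : X) : Prop :=
  x ≠ x' ∧ ¬ IsNonBasicEdge x x'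

/-- The basic geodesic graph: the simple graph on `X` whose edges are the basic edges. -/
def basicGeodesicGraph (X : Type*) [MetricSpace X] : SimpleGraph X where
  Adj x y := IsBasicEdge x y
  symm := ⟨fun x y ⟨h1, h2⟩ => ⟨h1.symm, fun h => h2 h.symm⟩⟩
  loopless := ⟨fun x ⟨h1, _⟩ => h1 rfl⟩

/-- The fourth-point condition. -/
def FourthPointCondition (X : Type*) [MetricSpace X] : Prop :=
  ∀ x y z : X, ∃ p : X,
    dist x p + dist y p + dist z p = (dist x y + dist y z + dist z x) / 2

/-- The tie-breaking rule: distances of distinct unordered pairs are distinct. -/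
def TieBreakingRule (X : Type*) [MetricSpace X] : Prop :=
  ∀ x y u v : X, x ≠ y → u ≠ v → ({x, y} : Set X) ≠ {u, v} → dist x y ≠ dist u v

lemma SimpleGraph.Walk.IsPath.append {V : Type*} {G : SimpleGraph V} {u v w : V}
    {p : G.Walk u v} {q : G.Walk v w} (hp : p.IsPath) (hq : q.IsPath)
    (hpq : ∀ a ∈ p.support, a ∈ q.support → a = v) : (p.append q).IsPath := by
  rw [isPath_def, support_append]
  have hq' := hq.support_nodup
  rw [← cons_tail_support, List.nodup_cons] at hq'
  refine hp.support_nodup.append hq'.2 fun a ha ha' => ?_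
  obtain rfl := hpq a ha (List.mem_of_mem_tail ha')
  exact hq'.1 ha'

section MetricLength

variable {X : Type*} [PseudoMetricSpace X] {G : SimpleGraph X}

def metricLength {u v : X} (p : G.Walk u v) : ℝ :=
  (p.darts.map fun d => dist d.fst d.snd).sum

@[simp]
lemma metricLength_nil {u : X} : metricLength (.nil : G.Walk u u) = 0 := rfl

@[simp]
lemma metricLength_cons {u v w : X} (h : G.Adj u v) (p : G.Walk v w) :
    metricLength (.cons h p) = dist u v + metricLength p := rfl

@[simp]
lemma metricLength_append {u v w : X} (p : G.Walk u v) (q : G.Walk v w) :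
    metricLength (p.append q) = metricLength p + metricLength q := by
  simp [metricLength]

@[simp]
lemma metricLength_reverse {u v : X} (p : G.Walk u v) :
    metricLength p.reverse = metricLength p := by
  simp [metricLength, List.sum_reverse, Function.comp_def, dist_comm]

lemma dist_le_metricLength {u v : X} (p : G.Walk u v) : dist u v ≤ metricLength p := by
  induction p with
  | nil => simp
  | @cons u v w _ p ih =>
    calc dist u w ≤ dist u v + dist v w := dist_triangle u v w
      _ ≤ metricLength (.cons _ p) := by rw [metricLength_cons]; linarith

lemma metricLength_bypass_le [DecidableEq X] {u v : X} (p : G.Walk u v) :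
    metricLength p.bypass ≤ metricLength p :=
  (p.darts_bypass_sublist_darts.map _).sum_le_sum fun _ ha => by
    obtain ⟨d, -, rfl⟩ := List.mem_map.1 ha
    exact dist_nonneg

lemma dist_add_dist_eq_of_metricLength_eq [DecidableEq X] {u v w : X} {p : G.Walk u v}
    (hp : metricLength p = dist u v) (hw : w ∈ p.support) :
    dist u w + dist w v = dist u v := by
  have hsplit := congrArg metricLength (p.take_spec hw)
  rw [metricLength_append] at hsplit
  linarith [dist_le_metricLength (p.takeUntil w hw), dist_le_metricLength (p.dropUntil w hw),
    dist_triangle u w v]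

end MetricLength

lemma dist_le_sum_dist_fin {X : Type*} [PseudoMetricSpace X] :
    ∀ {m : ℕ} (q : Fin (m + 1) → X),
      dist (q 0) (q (Fin.last m)) ≤ ∑ i : Fin m, dist (q i.castSucc) (q i.succ)
  | 0, q => by simp
  | m + 1, q => by
    rw [Fin.sum_univ_castSucc, Fin.succ_last]
    calc dist (q 0) (q (Fin.last (m + 1)))
        ≤ dist (q 0) (q (Fin.last m).castSucc) + dist (q (Fin.last m).castSucc) (q _) :=
          dist_triangle _ _ _
      _ ≤ _ := by
        gcongr
        exact dist_le_sum_dist_fin (q ∘ Fin.castSucc)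

section BasicEdge

variable {X : Type*} [MetricSpace X]

lemma IsNonBasicChain.exists_between {x y : X} (h : IsNonBasicChain x y) :
    ∃ p, p ≠ x ∧ p ≠ y ∧ dist x p + dist p y = dist x y := by
  obtain ⟨k, p, hk, hp, rfl, rfl, hsum⟩ := h
  refine ⟨p 1, hp.ne (by simp), hp.ne ?_, le_antisymm ?_ (dist_triangle _ _ _)⟩
  · rw [Ne, Fin.ext_iff, Fin.val_one, Fin.val_last]
    omega
  · rw [hsum, Fin.sum_univ_succ]
    exact add_le_add le_rfl (dist_le_sum_dist_fin fun i => p i.succ)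

lemma isBasicEdge_iff {x y : X} :
    IsBasicEdge x y ↔ x ≠ y ∧ ∀ p, dist x p + dist p y = dist x y → p = x ∨ p = y := by
  refine and_congr_right fun hxy => ⟨fun hb p hp => ?_, fun h hnb => ?_⟩
  · by_contra! hpxy
    refine hb (Or.inl ⟨1, ![x, p, y], le_rfl, ?_, rfl, rfl, by simp [Fin.sum_univ_two, hp]⟩)
    intro i j
    fin_cases i <;> fin_cases j <;> simp_all [eq_comm]
  · rcases hnb with hc | hc
    · obtain ⟨p, hpx, hpy, hp⟩ := hc.exists_between
      exact (h p hp).elim hpx hpy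
    · obtain ⟨p, hpy, hpx, hp⟩ := hc.exists_between
      exact (h p (by linarith [dist_comm x p, dist_comm p y, dist_comm x y])).elim hpx hpy

end BasicEdge

lemma fourthPointCondition_iff {X : Type*} [MetricSpace X] :
    FourthPointCondition X ↔ ∀ x y z : X, ∃ p, dist x p + dist p y = dist x y ∧
      dist y p + dist p z = dist y z ∧ dist z p + dist p x = dist z x := by
  refine forall₃_congr fun x y z => exists_congr fun p => ⟨fun h => ?_, fun ⟨hxy, hyz, hzx⟩ => ?_⟩
  · have := dist_triangle x p y
    have := dist_triangle y p z
    have := dist_triangle z p x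
    refine ⟨?_, ?_, ?_⟩ <;> linarith [dist_comm x p, dist_comm y p, dist_comm z p]
  · linarith [dist_comm x p, dist_comm y p, dist_comm z p]

namespace basicGeodesicGraph

variable {X : Type*} [MetricSpace X] [Finite X]

lemma exists_walk_metricLength_eq_dist (x y : X) :
    ∃ w : (basicGeodesicGraph X).Walk x y, metricLength w = dist x y := by
  let r : X × X → X × X → Prop := fun a b => dist a.1 a.2 < dist b.1 b.2
  have : IsTrans (X × X) r := ⟨fun _ _ _ => lt_trans⟩
  have : Std.Irrefl r := ⟨fun _ => lt_irrefl _⟩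
  suffices ∀ a : X × X, ∃ w : (basicGeodesicGraph X).Walk a.1 a.2,
      metricLength w = dist a.1 a.2 from this (x, y)
  intro a
  induction a using (Finite.wellFounded_of_trans_of_irrefl r).induction with
  | _ a ih =>
    obtain ⟨x, y⟩ := a
    by_cases hxy : x = y
    · subst hxy
      exact ⟨.nil, by simp⟩
    by_cases hb : (basicGeodesicGraph X).Adj x y
    · exact ⟨hb.toWalk, by simp⟩
    obtain ⟨p, hp, hpx, hpy⟩ : ∃ p, dist x p + dist p y = dist x y ∧ p ≠ x ∧ p ≠ y := by
      have : ¬ IsBasicEdge x y := hb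
      simpa [isBasicEdge_iff, hxy, and_assoc] using this
    obtain ⟨w₁, hw₁⟩ := ih (x, p) (by simp only [r]; linarith [dist_pos.2 hpy])
    obtain ⟨w₂, hw₂⟩ := ih (p, y) (by simp only [r]; linarith [dist_pos.2 hpx.symm])
    exact ⟨w₁.append w₂, by simp [hw₁, hw₂, hp]⟩

lemma preconnected : (basicGeodesicGraph X).Preconnected := fun x y =>
  ⟨(exists_walk_metricLength_eq_dist x y).choose⟩

lemma metricLength_eq_dist_of_isTree (hT : (basicGeodesicGraph X).IsTree) {x y : X}
    {P : (basicGeodesicGraph X).Walk x y} (hP : P.IsPath) : metricLength P = dist x y := by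
  classical
  obtain ⟨w, hw⟩ := exists_walk_metricLength_eq_dist x y
  obtain rfl : P = w.bypass := (hT.existsUnique_path x y).unique hP w.bypass_isPath
  exact le_antisymm (hw ▸ metricLength_bypass_le w) (dist_le_metricLength _)

lemma fourthPointCondition_of_isTree (hT : (basicGeodesicGraph X).IsTree) :
    FourthPointCondition X := by
  classical
  refine fourthPointCondition_iff.2 fun x y z => ?_
  have geodesic := fun {u v : X} (P : (basicGeodesicGraph X).Walk u v) (hP : P.IsPath) =>
    metricLength_eq_dist_of_isTree hT hP
  obtain ⟨Q, hQ, -⟩ := hT.existsUnique_path y z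
  obtain ⟨q, hqQ, hq⟩ := Q.support.toFinset.exists_min_image (dist x) ⟨y, by simp⟩
  rw [List.mem_toFinset] at hqQ
  obtain ⟨R, hR, -⟩ := hT.existsUnique_path x q
  have hRQ : ∀ a ∈ R.support, a ∈ Q.support → a = q := fun a haR haQ => by
    have := dist_add_dist_eq_of_metricLength_eq (geodesic R hR) haR
    exact dist_le_zero.1 (by linarith [hq a (List.mem_toFinset.2 haQ)])
  have hxy := geodesic _ <| hR.append (hQ.takeUntil hqQ).reverse fun a haR haQ =>
    hRQ a haR (Q.support_takeUntil_subset_support hqQ (by simpa using haQ))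
  have hxz := geodesic _ <| hR.append (hQ.dropUntil hqQ) fun a haR haQ =>
    hRQ a haR (Q.support_dropUntil_subset_support hqQ haQ)
  have hyz := dist_add_dist_eq_of_metricLength_eq (geodesic Q hQ) hqQ
  simp only [metricLength_append, metricLength_reverse, geodesic R hR,
    geodesic _ (hQ.takeUntil hqQ), geodesic _ (hQ.dropUntil hqQ)] at hxy hxz
  exact ⟨q, by linarith [dist_comm q y], hyz,
    by linarith [dist_comm x q, dist_comm x z, dist_comm z q]⟩

end basicGeodesicGraph

lemma TieBreakingRule.sym2_eq_of_dist_eq {X : Type*} [MetricSpace X] (htie : TieBreakingRule X)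
    {x y u v : X} (hxy : x ≠ y) (huv : u ≠ v) (h : dist x y = dist u v) : s(x, y) = s(u, v) := by
  by_contra hne
  refine htie x y u v hxy huv (fun hs => hne ?_) h
  rwa [Set.pair_eq_pair_iff, ← Sym2.eq_iff] at hs

namespace IsBasicEdge

variable {X : Type*} [MetricSpace X] {v₀ v₁ : X}

lemma between_or_between (h4 : FourthPointCondition X) (h : IsBasicEdge v₀ v₁) (z : X) :
    dist v₀ v₁ + dist v₁ z = dist v₀ z ∨ dist v₁ v₀ + dist v₀ z = dist v₁ z := by
  obtain ⟨p, h01, h1z, hz0⟩ := fourthPointCondition_iff.1 h4 v₀ v₁ z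
  rcases (isBasicEdge_iff.1 h).2 p h01 with rfl | rfl
  · exact .inr h1z
  · exact .inl (by linarith [dist_comm z p, dist_comm p v₀, dist_comm z v₀])

lemma dist_eq_of_between (h4 : FourthPointCondition X) (h : IsBasicEdge v₀ v₁) {a b : X}
    (hab : IsBasicEdge a b) (ha : dist v₀ v₁ + dist v₁ a = dist v₀ a)
    (hb : dist v₁ v₀ + dist v₀ b = dist v₁ b) : dist a b = dist v₀ v₁ := by
  have hpos := dist_pos.2 h.1
  obtain ⟨p, hp, hbp0, h0pa⟩ := fourthPointCondition_iff.1 h4 a b v₀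
  obtain ⟨q, hq, hbq1, h1qa⟩ := fourthPointCondition_iff.1 h4 a b v₁
  have := dist_triangle v₁ a b
  have := dist_triangle v₀ b a
  -- The medians of `a, b, v₀` and of `a, b, v₁` are ends of the basic edge `ab`. Every choice but
  -- `b` and `a` respectively forces `dist v₀ v₁ ≤ 0`; that one gives `dist a b = dist v₀ v₁`.
  rcases (isBasicEdge_iff.1 hab).2 p hp with hp | hp <;> subst p <;>
    rcases (isBasicEdge_iff.1 hab).2 q hq with hq | hq <;> subst q <;>
    linarith [dist_comm a b, dist_comm a v₀, dist_comm a v₁, dist_comm b v₀, dist_comm b v₁,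
      dist_comm v₀ v₁]

end IsBasicEdge

namespace basicGeodesicGraph

variable {X : Type*} [MetricSpace X]

lemma isBridge (htie : TieBreakingRule X) (h4 : FourthPointCondition X) {v₀ v₁ : X}
    (h : (basicGeodesicGraph X).Adj v₀ v₁) : (basicGeodesicGraph X).IsBridge s(v₀, v₁) := by
  let G' := (basicGeodesicGraph X).deleteEdges {s(v₀, v₁)}
  let nearV₀ : X → Prop := fun z => dist v₁ v₀ + dist v₀ z = dist v₁ z
  have step : ∀ {a b : X}, G'.Adj a b → nearV₀ a → nearV₀ b := by
    intro a b hab ha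
    rw [SimpleGraph.deleteEdges_adj, Set.mem_singleton_iff] at hab
    refine (IsBasicEdge.between_or_between h4 h b).resolve_left fun hb => hab.2 ?_
    have hdist := IsBasicEdge.dist_eq_of_between h4 h hab.1.symm hb ha
    rw [Sym2.eq_swap]
    exact htie.sym2_eq_of_dist_eq hab.1.ne.symm h.ne hdist
  rw [SimpleGraph.isBridge_iff, SimpleGraph.reachable_iff_reflTransGen]
  intro hreach
  have reach : ∀ z, Relation.ReflTransGen G'.Adj v₀ z → nearV₀ z := fun z hz => by
    induction hz with
    | refl => simp [nearV₀]
    | tail _ hbc ih => exact step hbc ih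
  have hv₁ := reach v₁ hreach
  simp only [nearV₀, dist_self] at hv₁
  linarith [dist_pos.2 h.ne, dist_comm v₀ v₁]

lemma isAcyclic (htie : TieBreakingRule X) (h4 : FourthPointCondition X) :
    (basicGeodesicGraph X).IsAcyclic :=
  SimpleGraph.isAcyclic_iff_forall_adj_isBridge.2 fun _ _ h => isBridge htie h4 h

end basicGeodesicGraph

/-- Under the tie-breaking rule, the basic geodesic graph of a finite metric space is
a tree iff the space satisfies the fourth-point condition. -/
theorem basicGeodesicGraph_isTree_iff_fourthPointCondition
    {X : Type*} [MetricSpace X] [Fintype X] [Nonempty X]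
    (htie : TieBreakingRule X) :
    (basicGeodesicGraph X).IsTree ↔ FourthPointCondition X :=
  ⟨basicGeodesicGraph.fourthPointCondition_of_isTree, fun h4 =>
    ⟨⟨basicGeodesicGraph.preconnected⟩, basicGeodesicGraph.isAcyclic htie h4⟩⟩
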